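/- Let p be a positive integer, C a real symmetric positive definite p×p matrix with largest eigenvalue λ_max(C), v ∈ ℝ^p nonzero, and ρ_1, ρ_2 > 0. Define θ(ξ) = ρ_1 ρ_2 ξ v^T (I_p − ξ C)^{−1} v, q(ξ) = (ξ²/p) tr(((I_p − ξ C)^{−1} C)²), s(ξ) = ρ_1 ρ_2 ξ² v^T (I_p − ξ C)^{−1} C (I_p − ξ C)^{−1} v, and assume there exists ξ_m ∈ (0, 1/λ_max(C)) with θ(ξ_m) = 1. For parameters c_l, c_u > 0 let ξ_sup(c_u) = ξ_m if q < c_u on (0, ξ_m) and otherwise the unique point of (0, ξ_m] where q equals c_u; on (0, ξ_sup(c_u)) define m_{c_l,c_u}(ξ) = 2 c_l θ(ξ)/(c_u (1 − θ(ξ))), σ²_{c_l,c_u}(ξ) = [ρ_1 ρ_2 (2 c_l + m_{c_l,c_u}(ξ) c_u)² s(ξ) + ρ_1 ρ_2 (4 c_l + m_{c_l,c_u}(ξ)² c_u) q(ξ)] / (c_u (c_u − q(ξ))), and for e > 0 let ξ_e(c_l, c_u) ∈ (0, ξ_sup(c_u)) be the unique solution of ρ_1 ρ_2 m_{c_l,c_u}(ξ)²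 + σ²_{c_l,c_u}(ξ) = e², and set r(c_l, c_u, e) = σ²_{c_l,c_u}(ξ_e(c_l,c_u)) / m_{c_l,c_u}(ξ_e(c_l,c_u))². Then for any e > 0 and any c_l' ≥ c_l, c_u' ≥ c_u with c_l' + c_u' > c_l + c_u, there exists e' > 0 such that r(c_l', c_u', e') < r(c_l, c_u, e). -/

import Mathlib

open Matrix BigOperators

/-- The resolvent `(I_p - ξ C)⁻¹`. -/
noncomputable def resolv (p : ℕ) (C : Matrix (Fin p) (Fin p) ℝ) (ξ : ℝ) :
    Matrix (Fin p) (Fin p) ℝ :=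
  ((1 : Matrix (Fin p) (Fin p) ℝ) - ξ • C)⁻¹

/-- `θ(ξ) = ρ₁ ρ₂ ξ vᵀ (I - ξC)⁻¹ v`. -/
noncomputable def theta (p : ℕ) (C : Matrix (Fin p) (Fin p) ℝ) (v : Fin p → ℝ)
    (ρ1 ρ2 ξ : ℝ) : ℝ :=
  ρ1 * ρ2 * ξ * (v ⬝ᵥ (resolv p C ξ *ᵥ v))

/-- `q(ξ) = (ξ²/p) tr( ((I - ξC)⁻¹ C)² )`. -/
noncomputable def qfun (p : ℕ) (C : Matrix (Fin p) (Fin p) ℝ) (ξ : ℝ) : ℝ :=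
  ξ ^ 2 / p * Matrix.trace ((resolv p C ξ * C) ^ 2)

/-- `s(ξ) = ρ₁ ρ₂ ξ² vᵀ (I - ξC)⁻¹ C (I - ξC)⁻¹ v`. -/
noncomputable def sfun (p : ℕ) (C : Matrix (Fin p) (Fin p) ℝ) (v : Fin p → ℝ)
    (ρ1 ρ2 ξ : ℝ) : ℝ :=
  ρ1 * ρ2 * ξ ^ 2 * (v ⬝ᵥ ((resolv p C ξ * C * resolv p C ξ) *ᵥ v))

/-- `m(ξ) = 2 c_l θ(ξ) / (c_u (1 - θ(ξ)))`. -/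
noncomputable def mfun (p : ℕ) (C : Matrix (Fin p) (Fin p) ℝ) (v : Fin p → ℝ)
    (ρ1 ρ2 cl cu ξ : ℝ) : ℝ :=
  2 * cl * theta p C v ρ1 ρ2 ξ / (cu * (1 - theta p C v ρ1 ρ2 ξ))

/-- `σ²(ξ) = [ρ₁ρ₂ (2c_l + m(ξ)c_u)² s(ξ) + ρ₁ρ₂ (4c_l + m(ξ)²c_u) q(ξ)] / (c_u (c_u - q(ξ)))`. -/
noncomputable def sigma2 (p : ℕ) (C : Matrix (Fin p) (Fin p) ℝ) (v : Fin p → ℝ)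
    (ρ1 ρ2 cl cu ξ : ℝ) : ℝ :=
  (ρ1 * ρ2 * (2 * cl + mfun p C v ρ1 ρ2 cl cu ξ * cu) ^ 2 * sfun p C v ρ1 ρ2 ξ
    + ρ1 * ρ2 * (4 * cl + (mfun p C v ρ1 ρ2 cl cu ξ) ^ 2 * cu) * qfun p C ξ)
  / (cu * (cu - qfun p C ξ))

/-! Diagonalising `C`, the functions `θ`, `s` and `q` become nonnegative combinations of
`ξ ↦ ξ / (1 - ξ λᵢ)` and its square, hence are strictly increasing on `[0, 1/λ_max)` and vanish
at `0`. So `ρ₁ρ₂ m² + σ²` is strictly increasing on `{ξ ∈ (0, ξ_m) | q ξ < c_u}`, which contains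
`(0, ξ_sup c_u)`, and `ξ_e` is determined by `e`. The point `ξ = ξ_e(c_l, c_u, e)` also satisfies
`q ξ < c_u'`, hence equals `ξ_e(c_l', c_u', e')` for `e'² = ρ₁ρ₂ m² + σ²` evaluated with
`(c_l', c_u')` at `ξ`. At this common `ξ`,
`σ²/m² = ρ₁ρ₂/θ² · (a + (a + θ²) q/(c_u - q))` with `a = s + (1 - θ)² q/c_l`,
which is strictly decreasing in `c_l` and in `c_u`. -/

open Unitary

namespace Matrix

variable {n R : Type*} [Fintype n] [DecidableEq n]

theorem trace_conjStarAlgAut [CommRing R] [StarRing R] (u : unitary (Matrix n n R))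
    (X : Matrix n n R) : trace (conjStarAlgAut R _ u X) = trace X := by
  rw [conjStarAlgAut_apply, trace_mul_cycle, coe_star_mul_self, one_mul]

theorem dotProduct_conjStarAlgAut_diagonal_mulVec [CommRing R] [StarRing R] [TrivialStar R]
    (u : unitary (Matrix n n R)) (d v : n → R) :
    v ⬝ᵥ (conjStarAlgAut R _ u (diagonal d) *ᵥ v) =
      ∑ i, d i * ((star u : Matrix n n R) *ᵥ v) i ^ 2 := by
  have hstar : (star u : Matrix n n R) = (u : Matrix n n R)ᵀ := by
    rw [star_eq_conjTranspose, conjTranspose_eq_transpose_of_trivial]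
  rw [conjStarAlgAut_apply, ← mulVec_mulVec, ← mulVec_mulVec, dotProduct_mulVec,
    ← mulVec_transpose, ← hstar]
  simp only [dotProduct, mulVec_diagonal]
  exact Finset.sum_congr rfl fun i _ => by ring

namespace IsHermitian

variable {A : Matrix n n ℝ} (hA : A.IsHermitian)

noncomputable def eigenCoords (v : n → ℝ) : n → ℝ :=
  (star hA.eigenvectorUnitary : Matrix n n ℝ) *ᵥ v

theorem eigenCoords_ne_zero {v : n → ℝ} (hv : v ≠ 0) : hA.eigenCoords v ≠ 0 := by
  intro h
  apply hv
  rw [← one_mulVec v, ← coe_mul_star_self hA.eigenvectorUnitary, ← mulVec_mulVec]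
  exact (congrArg _ h).trans (mulVec_zero _)

theorem mul_eigenvalues_lt_one {lmax ξ : ℝ} (hlmax : IsGreatest (Set.range hA.eigenvalues) lmax)
    (hξ : ξ ∈ Set.Ico 0 lmax⁻¹) (i : n) : ξ * hA.eigenvalues i < 1 := by
  have hl : 0 < lmax := inv_pos.mp (hξ.1.trans_lt hξ.2)
  calc ξ * hA.eigenvalues i ≤ ξ * lmax := by
        gcongr
        · exact hξ.1
        · exact hlmax.2 ⟨i, rfl⟩
    _ < lmax⁻¹ * lmax := by gcongr; exact hξ.2
    _ = 1 := inv_mul_cancel₀ hl.ne'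

theorem eq_conjStarAlgAut_diagonal :
    A = conjStarAlgAut ℝ _ hA.eigenvectorUnitary (diagonal hA.eigenvalues) := by
  simpa using hA.spectral_theorem

theorem conjStarAlgAut_diagonal_mul (d : n → ℝ) :
    conjStarAlgAut ℝ _ hA.eigenvectorUnitary (diagonal d) * A =
      conjStarAlgAut ℝ _ hA.eigenvectorUnitary (diagonal fun i => d i * hA.eigenvalues i) := by
  rw [congrArg (conjStarAlgAut ℝ _ hA.eigenvectorUnitary (diagonal d) * ·)
    hA.eq_conjStarAlgAut_diagonal, ← map_mul, diagonal_mul_diagonal]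

theorem one_sub_smul_eq_conjStarAlgAut (ξ : ℝ) :
    1 - ξ • A = conjStarAlgAut ℝ _ hA.eigenvectorUnitary
      (diagonal fun i => 1 - ξ * hA.eigenvalues i) := by
  conv_lhs => rw [hA.eq_conjStarAlgAut_diagonal]
  rw [← map_one (conjStarAlgAut ℝ _ hA.eigenvectorUnitary), ← map_smul, ← map_sub,
    ← diagonal_smul, ← diagonal_one, diagonal_sub]
  rfl

theorem inv_one_sub_smul_eq_conjStarAlgAut {ξ : ℝ} (hξ : ∀ i, 1 - ξ * hA.eigenvalues i ≠ 0) :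
    (1 - ξ • A)⁻¹ = conjStarAlgAut ℝ _ hA.eigenvectorUnitary
      (diagonal fun i => (1 - ξ * hA.eigenvalues i)⁻¹) := by
  refine inv_eq_right_inv ?_
  rw [hA.one_sub_smul_eq_conjStarAlgAut, ← map_mul, diagonal_mul_diagonal,
    ← map_one (conjStarAlgAut ℝ _ hA.eigenvectorUnitary), ← diagonal_one]
  congr 2
  exact funext fun i => mul_inv_cancel₀ (hξ i)

end IsHermitian

end Matrix

theorem strictMonoOn_div_one_sub_mul (a : ℝ) :
    StrictMonoOn (fun ξ => ξ / (1 - ξ * a)) {ξ | ξ * a < 1} := by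
  intro x (hx : x * a < 1) y (hy : y * a < 1) hxy
  rw [div_lt_div_iff₀ (by linarith) (by linarith)]
  nlinarith

theorem strictMonoOn_mul_div_one_sub_mul_sq {a c : ℝ} (hc : 0 < c) :
    StrictMonoOn (fun ξ => c * (ξ / (1 - ξ * a)) ^ 2) {ξ | 0 ≤ ξ ∧ ξ * a < 1} := by
  intro x hx y hy hxy
  have hx₀ : 0 ≤ x / (1 - x * a) := div_nonneg hx.1 (by linarith [hx.2])
  have := strictMonoOn_div_one_sub_mul a hx.2 hy.2 hxy
  dsimp only at this ⊢
  gcongr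

theorem strictMonoOn_sum_mul {ι : Type*} [Fintype ι] {s : Set ℝ} {a : ι → ℝ} {f : ι → ℝ → ℝ}
    (ha : ∀ i, 0 ≤ a i) (ha' : a ≠ 0) (hf : ∀ i, StrictMonoOn (f i) s) :
    StrictMonoOn (fun x => ∑ i, a i * f i x) s := by
  intro x hx y hy hxy
  obtain ⟨j, hj⟩ := Function.ne_iff.mp ha'
  refine Finset.sum_lt_sum (fun i _ => ?_) ⟨j, Finset.mem_univ j, ?_⟩
  · exact mul_le_mul_of_nonneg_left (hf i hx hy hxy).le (ha i)
  · exact mul_lt_mul_of_pos_left (hf j hx hy hxy) (lt_of_le_of_ne (ha j) (Ne.symm hj))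

theorem StrictMonoOn.pos_of_mem_Ioo {f : ℝ → ℝ} {b ξ : ℝ} (hf : StrictMonoOn f (Set.Icc 0 b))
    (hf₀ : f 0 = 0) (hξ : ξ ∈ Set.Ioo 0 b) : 0 < f ξ :=
  hf₀ ▸ (hf.mapsTo_Ioo hξ).1

section SpectralFormulas

variable {p : ℕ} {C : Matrix (Fin p) (Fin p) ℝ} (hC : C.IsHermitian) {ξ : ℝ}

theorem resolv_eq_conjStarAlgAut (hξ : ∀ i, 1 - ξ * hC.eigenvalues i ≠ 0) :
    resolv p C ξ = conjStarAlgAut ℝ _ hC.eigenvectorUnitary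
      (diagonal fun i => (1 - ξ * hC.eigenvalues i)⁻¹) :=
  hC.inv_one_sub_smul_eq_conjStarAlgAut hξ

theorem theta_eq_sum (v : Fin p → ℝ) (ρ1 ρ2 : ℝ) (hξ : ∀ i, 1 - ξ * hC.eigenvalues i ≠ 0) :
    theta p C v ρ1 ρ2 ξ =
      ∑ i, ρ1 * ρ2 * hC.eigenCoords v i ^ 2 * (ξ / (1 - ξ * hC.eigenvalues i)) := by
  rw [theta, resolv_eq_conjStarAlgAut hC hξ, dotProduct_conjStarAlgAut_diagonal_mulVec,
    Finset.mul_sum]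
  exact Finset.sum_congr rfl fun i _ => by rw [IsHermitian.eigenCoords]; ring

theorem sfun_eq_sum (v : Fin p → ℝ) (ρ1 ρ2 : ℝ) (hξ : ∀ i, 1 - ξ * hC.eigenvalues i ≠ 0) :
    sfun p C v ρ1 ρ2 ξ = ∑ i, ρ1 * ρ2 * hC.eigenCoords v i ^ 2 *
      (hC.eigenvalues i * (ξ / (1 - ξ * hC.eigenvalues i)) ^ 2) := by
  rw [sfun, resolv_eq_conjStarAlgAut hC hξ, hC.conjStarAlgAut_diagonal_mul, ← map_mul,
    diagonal_mul_diagonal, dotProduct_conjStarAlgAut_diagonal_mulVec, Finset.mul_sum]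
  exact Finset.sum_congr rfl fun i _ => by rw [IsHermitian.eigenCoords]; ring

theorem qfun_eq_sum (hξ : ∀ i, 1 - ξ * hC.eigenvalues i ≠ 0) :
    qfun p C ξ =
      ∑ i, (p : ℝ)⁻¹ * (hC.eigenvalues i ^ 2 * (ξ / (1 - ξ * hC.eigenvalues i)) ^ 2) := by
  rw [qfun, resolv_eq_conjStarAlgAut hC hξ, hC.conjStarAlgAut_diagonal_mul, ← map_pow,
    diagonal_pow, trace_conjStarAlgAut, trace_diagonal, Finset.mul_sum]
  exact Finset.sum_congr rfl fun i _ => by simp only [Pi.pow_apply]; ring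

end SpectralFormulas

section Monotonicity

variable {p : ℕ} {C : Matrix (Fin p) (Fin p) ℝ} {lmax : ℝ}

theorem theta_zero (v : Fin p → ℝ) (ρ1 ρ2 : ℝ) : theta p C v ρ1 ρ2 0 = 0 := by
  simp [theta]

theorem sfun_zero (v : Fin p → ℝ) (ρ1 ρ2 : ℝ) : sfun p C v ρ1 ρ2 0 = 0 := by
  simp [sfun]

theorem qfun_zero : qfun p C 0 = 0 := by
  simp [qfun]

theorem eigenWeights_ne_zero (hC : C.IsHermitian) {v : Fin p → ℝ} (hv : v ≠ 0) {ρ1 ρ2 : ℝ}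
    (hρ : 0 < ρ1 * ρ2) : (fun i => ρ1 * ρ2 * hC.eigenCoords v i ^ 2) ≠ 0 := by
  intro h
  refine hC.eigenCoords_ne_zero hv (funext fun i => ?_)
  simpa [hρ.ne'] using congrFun h i

theorem theta_strictMonoOn (hC : C.IsHermitian)
    (hlmax : IsGreatest (Set.range hC.eigenvalues) lmax) {v : Fin p → ℝ} (hv : v ≠ 0)
    {ρ1 ρ2 : ℝ} (hρ : 0 < ρ1 * ρ2) :
    StrictMonoOn (theta p C v ρ1 ρ2) (Set.Ico 0 lmax⁻¹) := by
  refine StrictMonoOn.congr ?_ fun ξ hξ => (theta_eq_sum hC v ρ1 ρ2 fun i =>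
    (sub_pos.2 (hC.mul_eigenvalues_lt_one hlmax hξ i)).ne').symm
  refine strictMonoOn_sum_mul (fun i => by positivity) (eigenWeights_ne_zero hC hv hρ) fun i => ?_
  exact (strictMonoOn_div_one_sub_mul _).mono fun ξ hξ => hC.mul_eigenvalues_lt_one hlmax hξ i

theorem sfun_strictMonoOn (hC : C.PosDef)
    (hlmax : IsGreatest (Set.range hC.1.eigenvalues) lmax) {v : Fin p → ℝ} (hv : v ≠ 0)
    {ρ1 ρ2 : ℝ} (hρ : 0 < ρ1 * ρ2) :
    StrictMonoOn (sfun p C v ρ1 ρ2) (Set.Ico 0 lmax⁻¹) := by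
  refine StrictMonoOn.congr ?_ fun ξ hξ => (sfun_eq_sum hC.1 v ρ1 ρ2 fun i =>
    (sub_pos.2 (hC.1.mul_eigenvalues_lt_one hlmax hξ i)).ne').symm
  refine strictMonoOn_sum_mul (fun i => by positivity) (eigenWeights_ne_zero hC.1 hv hρ)
    fun i => ?_
  exact (strictMonoOn_mul_div_one_sub_mul_sq (hC.eigenvalues_pos i)).mono fun ξ hξ =>
    ⟨hξ.1, hC.1.mul_eigenvalues_lt_one hlmax hξ i⟩

theorem qfun_strictMonoOn (hp : 0 < p) (hC : C.PosDef)
    (hlmax : IsGreatest (Set.range hC.1.eigenvalues) lmax) :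
    StrictMonoOn (qfun p C) (Set.Ico 0 lmax⁻¹) := by
  refine StrictMonoOn.congr ?_ fun ξ hξ => (qfun_eq_sum hC.1 fun i =>
    (sub_pos.2 (hC.1.mul_eigenvalues_lt_one hlmax hξ i)).ne').symm
  refine strictMonoOn_sum_mul (fun i => by positivity)
    (Function.ne_iff.mpr ⟨⟨0, hp⟩, by simp [hp.ne']⟩) fun i => ?_
  exact (strictMonoOn_mul_div_one_sub_mul_sq (pow_pos (hC.eigenvalues_pos i) 2)).mono
    fun ξ hξ => ⟨hξ.1, hC.1.mul_eigenvalues_lt_one hlmax hξ i⟩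

end Monotonicity

section ErrorFunctional

variable {p : ℕ} {C : Matrix (Fin p) (Fin p) ℝ} {v : Fin p → ℝ} {ρ1 ρ2 cl cu : ℝ}

theorem mfun_sq_add_sigma2_pos (hρ : 0 < ρ1 * ρ2) (hcl : 0 < cl) {ξ : ℝ}
    (hθ₀ : 0 < theta p C v ρ1 ρ2 ξ) (hθ₁ : theta p C v ρ1 ρ2 ξ < 1)
    (hs : 0 ≤ sfun p C v ρ1 ρ2 ξ) (hq₀ : 0 ≤ qfun p C ξ) (hq : qfun p C ξ < cu) :
    0 < ρ1 * ρ2 * mfun p C v ρ1 ρ2 cl cu ξ ^ 2 + sigma2 p C v ρ1 ρ2 cl cu ξ := by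
  have : 0 < 1 - theta p C v ρ1 ρ2 ξ := by linarith
  have : 0 < cu - qfun p C ξ := by linarith
  have : 0 < cu := hq₀.trans_lt hq
  unfold sigma2 mfun
  positivity

theorem mfun_sq_add_sigma2_lt (hρ : 0 < ρ1 * ρ2) (hcl : 0 < cl) (hcu : 0 < cu) {ξ₁ ξ₂ : ℝ}
    (hθ₁ : 0 < theta p C v ρ1 ρ2 ξ₁) (hθ : theta p C v ρ1 ρ2 ξ₁ < theta p C v ρ1 ρ2 ξ₂)
    (hθ₂ : theta p C v ρ1 ρ2 ξ₂ < 1)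
    (hs₁ : 0 ≤ sfun p C v ρ1 ρ2 ξ₁) (hs : sfun p C v ρ1 ρ2 ξ₁ ≤ sfun p C v ρ1 ρ2 ξ₂)
    (hq₁ : 0 ≤ qfun p C ξ₁) (hq : qfun p C ξ₁ ≤ qfun p C ξ₂) (hq₂ : qfun p C ξ₂ < cu) :
    ρ1 * ρ2 * mfun p C v ρ1 ρ2 cl cu ξ₁ ^ 2 + sigma2 p C v ρ1 ρ2 cl cu ξ₁ <
      ρ1 * ρ2 * mfun p C v ρ1 ρ2 cl cu ξ₂ ^ 2 + sigma2 p C v ρ1 ρ2 cl cu ξ₂ := by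
  have hm₁ : 0 < mfun p C v ρ1 ρ2 cl cu ξ₁ := by
    unfold mfun
    have : 0 < 1 - theta p C v ρ1 ρ2 ξ₁ := by linarith
    positivity
  have hm : mfun p C v ρ1 ρ2 cl cu ξ₁ < mfun p C v ρ1 ρ2 cl cu ξ₂ := by
    unfold mfun
    rw [div_lt_div_iff₀ (by nlinarith) (by nlinarith)]
    nlinarith [mul_pos hcl hcu]
  have : 0 < cu - qfun p C ξ₂ := by linarith
  have : 0 ≤ sfun p C v ρ1 ρ2 ξ₂ := hs₁.trans hs
  have : 0 ≤ qfun p C ξ₂ := hq₁.trans hq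
  unfold sigma2
  refine add_lt_add_of_lt_of_le (by gcongr) ?_
  gcongr

theorem strictMonoOn_mfun_sq_add_sigma2 (hρ : 0 < ρ1 * ρ2) (hcl : 0 < cl) (hcu : 0 < cu)
    {b : ℝ} (hθ : StrictMonoOn (theta p C v ρ1 ρ2) (Set.Icc 0 b)) (hθb : theta p C v ρ1 ρ2 b = 1)
    (hs : StrictMonoOn (sfun p C v ρ1 ρ2) (Set.Icc 0 b))
    (hq : StrictMonoOn (qfun p C) (Set.Icc 0 b)) :
    StrictMonoOn
      (fun ξ => ρ1 * ρ2 * mfun p C v ρ1 ρ2 cl cu ξ ^ 2 + sigma2 p C v ρ1 ρ2 cl cu ξ)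
      {ξ ∈ Set.Ioo 0 b | qfun p C ξ < cu} := by
  rintro ξ₁ ⟨hξ₁, -⟩ ξ₂ ⟨hξ₂, hq₂⟩ hξ
  have hI : Set.Ioo 0 b ⊆ Set.Icc 0 b := Set.Ioo_subset_Icc_self
  exact mfun_sq_add_sigma2_lt hρ hcl hcu (hθ.pos_of_mem_Ioo (theta_zero v ρ1 ρ2) hξ₁)
    (hθ (hI hξ₁) (hI hξ₂) hξ) (hθb ▸ (hθ.mapsTo_Ioo hξ₂).2)
    (hs.pos_of_mem_Ioo (sfun_zero v ρ1 ρ2) hξ₁).le (hs (hI hξ₁) (hI hξ₂) hξ).le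
    (hq.pos_of_mem_Ioo qfun_zero hξ₁).le (hq (hI hξ₁) (hI hξ₂) hξ).le hq₂

end ErrorFunctional

noncomputable def perfRatio (ρ t q s cl cu : ℝ) : ℝ :=
  ρ / t ^ 2 * (s + (1 - t) ^ 2 * q / cl + (s + (1 - t) ^ 2 * q / cl + t ^ 2) * q / (cu - q))

theorem sigma2_div_mfun_sq {p : ℕ} {C : Matrix (Fin p) (Fin p) ℝ} {v : Fin p → ℝ}
    {ρ1 ρ2 cl cu ξ : ℝ} (hcl : cl ≠ 0) (hcu : cu ≠ 0) (hθ₀ : theta p C v ρ1 ρ2 ξ ≠ 0)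
    (hθ₁ : theta p C v ρ1 ρ2 ξ ≠ 1) (hq : qfun p C ξ ≠ cu) :
    sigma2 p C v ρ1 ρ2 cl cu ξ / mfun p C v ρ1 ρ2 cl cu ξ ^ 2 =
      perfRatio (ρ1 * ρ2) (theta p C v ρ1 ρ2 ξ) (qfun p C ξ) (sfun p C v ρ1 ρ2 ξ) cl cu := by
  have : 1 - theta p C v ρ1 ρ2 ξ ≠ 0 := sub_ne_zero.2 hθ₁.symm
  have : cu - qfun p C ξ ≠ 0 := sub_ne_zero.2 hq.symm
  unfold sigma2 mfun perfRatio
  field_simp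
  ring

theorem perfRatio_lt_perfRatio {ρ t q s cl cu cl' cu' : ℝ} (hρ : 0 < ρ) (ht₀ : 0 < t)
    (ht₁ : t ≠ 1) (hq : 0 < q) (hs : 0 ≤ s) (hcl : 0 < cl) (hqcu : q < cu)
    (hcl' : cl ≤ cl') (hcu' : cu ≤ cu') (hsum : cl + cu < cl' + cu') :
    perfRatio ρ t q s cl' cu' < perfRatio ρ t q s cl cu := by
  have : 0 < (1 - t) ^ 2 := by have := sub_ne_zero.2 ht₁.symm; positivity
  unfold perfRatio
  gcongr ρ / t ^ 2 * ?_
  rcases hcl'.lt_or_eq with hcl' | rfl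
  · refine add_lt_add_of_lt_of_le (by gcongr) ?_
    gcongr
  · refine add_lt_add_of_le_of_lt le_rfl ?_
    gcongr
    linarith

theorem Ioo_subset_of_xiSup {q : ℝ → ℝ} {ξm ξs u : ℝ} (hq : StrictMonoOn q (Set.Ioc 0 ξm))
    (hξs : ((∀ ξ ∈ Set.Ioo (0 : ℝ) ξm, q ξ < u) → ξs = ξm) ∧
      (¬ (∀ ξ ∈ Set.Ioo (0 : ℝ) ξm, q ξ < u) → ξs ∈ Set.Ioc (0 : ℝ) ξm ∧ q ξs = u)) :
    Set.Ioo 0 ξs ⊆ {ξ ∈ Set.Ioo 0 ξm | q ξ < u} := by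
  intro ξ hξ
  by_cases h : ∀ ξ ∈ Set.Ioo (0 : ℝ) ξm, q ξ < u
  · rw [hξs.1 h] at hξ
    exact ⟨hξ, h ξ hξ⟩
  · obtain ⟨hξs_mem, hqξs⟩ := hξs.2 h
    refine ⟨⟨hξ.1, hξ.2.trans_le hξs_mem.2⟩, hqξs ▸ hq ?_ hξs_mem hξ.2⟩
    exact ⟨hξ.1, hξ.2.le.trans hξs_mem.2⟩

/-- consistency of the centered-similarities regularization: with
`ξ_sup(c_u)` defined from `ξ_m` and `q` as in the text, and `ξ_e(c_l, c_u, e)` the unique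
solution in `(0, ξ_sup(c_u))` of `ρ₁ρ₂ m(ξ)² + σ²(ξ) = e²`, the inverse performance
measure `r(c_l, c_u, e) = σ²(ξ_e)/m(ξ_e)²` satisfies: for any `e > 0` and
`c_l' ≥ c_l`, `c_u' ≥ c_u` with `c_l' + c_u' > c_l + c_u`, there exists `e' > 0` with
`r(c_l', c_u', e') < r(c_l, c_u, e)`. -/
theorem stmt18 (p : ℕ) (hp : 0 < p) (C : Matrix (Fin p) (Fin p) ℝ) (hC : C.PosDef)
    (lmax : ℝ) (hlmax : IsGreatest (Set.range hC.1.eigenvalues) lmax)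
    (v : Fin p → ℝ) (hv : v ≠ 0) (ρ1 ρ2 : ℝ) (hρ1 : 0 < ρ1) (hρ2 : 0 < ρ2)
    (ξm : ℝ) (hξm : ξm ∈ Set.Ioo (0 : ℝ) lmax⁻¹) (hθξm : theta p C v ρ1 ρ2 ξm = 1)
    (ξsup : ℝ → ℝ)
    (hξsup : ∀ cu : ℝ, 0 < cu →
      ((∀ ξ ∈ Set.Ioo (0 : ℝ) ξm, qfun p C ξ < cu) → ξsup cu = ξm) ∧
      (¬ (∀ ξ ∈ Set.Ioo (0 : ℝ) ξm, qfun p C ξ < cu) →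
        ξsup cu ∈ Set.Ioc (0 : ℝ) ξm ∧ qfun p C (ξsup cu) = cu))
    (ξe : ℝ → ℝ → ℝ → ℝ)
    (hξe : ∀ cl cu e : ℝ, 0 < cl → 0 < cu → 0 < e →
      ξe cl cu e ∈ Set.Ioo (0 : ℝ) (ξsup cu) ∧
      ρ1 * ρ2 * (mfun p C v ρ1 ρ2 cl cu (ξe cl cu e)) ^ 2 +
        sigma2 p C v ρ1 ρ2 cl cu (ξe cl cu e) = e ^ 2)
    (cl cu cl' cu' e : ℝ) (hcl : 0 < cl) (hcu : 0 < cu) (he : 0 < e)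
    (hcl' : cl ≤ cl') (hcu' : cu ≤ cu') (hsum : cl + cu < cl' + cu') :
    ∃ e' : ℝ, 0 < e' ∧
      sigma2 p C v ρ1 ρ2 cl' cu' (ξe cl' cu' e') /
          (mfun p C v ρ1 ρ2 cl' cu' (ξe cl' cu' e')) ^ 2 <
      sigma2 p C v ρ1 ρ2 cl cu (ξe cl cu e) /
          (mfun p C v ρ1 ρ2 cl cu (ξe cl cu e)) ^ 2 := by
  have hρ := mul_pos hρ1 hρ2
  have hcl'₀ := hcl.trans_le hcl'
  have hcu'₀ := hcu.trans_le hcu'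
  have hIcc : Set.Icc 0 ξm ⊆ Set.Ico 0 lmax⁻¹ := Set.Icc_subset_Ico_right hξm.2
  have hθ := (theta_strictMonoOn hC.1 hlmax hv hρ).mono hIcc
  have hs := (sfun_strictMonoOn hC hlmax hv hρ).mono hIcc
  have hq := (qfun_strictMonoOn hp hC hlmax).mono hIcc
  have hD u (hu : 0 < u) := Ioo_subset_of_xiSup (hq.mono Set.Ioc_subset_Icc_self) (hξsup u hu)
  obtain ⟨hx, -⟩ := hξe cl cu e hcl hcu he
  set x := ξe cl cu e
  obtain ⟨hxm, hqx⟩ := hD cu hcu hx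
  have hθx₀ := hθ.pos_of_mem_Ioo (theta_zero v ρ1 ρ2) hxm
  have hθx₁ : theta p C v ρ1 ρ2 x < 1 := hθξm ▸ (hθ.mapsTo_Ioo hxm).2
  have hsx := hs.pos_of_mem_Ioo (sfun_zero v ρ1 ρ2) hxm
  have hqx₀ := hq.pos_of_mem_Ioo qfun_zero hxm
  set F := fun ξ => ρ1 * ρ2 * mfun p C v ρ1 ρ2 cl' cu' ξ ^ 2 + sigma2 p C v ρ1 ρ2 cl' cu' ξ
  have hFx : 0 < F x :=
    mfun_sq_add_sigma2_pos hρ hcl'₀ hθx₀ hθx₁ hsx.le hqx₀.le (hqx.trans_le hcu')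
  obtain ⟨hy, hFy⟩ := hξe cl' cu' √(F x) hcl'₀ hcu'₀ (Real.sqrt_pos.2 hFx)
  have hyx : ξe cl' cu' √(F x) = x :=
    (strictMonoOn_mfun_sq_add_sigma2 hρ hcl'₀ hcu'₀ hθ hθξm hs hq).injOn (hD cu' hcu'₀ hy)
      ⟨hxm, hqx.trans_le hcu'⟩ (hFy.trans (Real.sq_sqrt hFx.le))
  refine ⟨√(F x), Real.sqrt_pos.2 hFx, ?_⟩
  rw [hyx, sigma2_div_mfun_sq hcl'₀.ne' hcu'₀.ne' hθx₀.ne' hθx₁.ne (by linarith),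
    sigma2_div_mfun_sq hcl.ne' hcu.ne' hθx₀.ne' hθx₁.ne hqx.ne]
  exact perfRatio_lt_perfRatio hρ hθx₀ hθx₁.ne hqx₀ hsx.le hcl hqx hcl' hcu' hsum
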